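/- Let Φ and Ψ be representation forms on a Lie group G with values in End(V) such that Φ^{(0)} = Ψ^{(0)} and Φ^{(1)} = Ψ^{(1)}. Then Φ^{(k)} = Ψ^{(k)} for all k, i.e. Φ = Ψ. -/

import Mathlib

/-! Taking the second factor of a product to be the identity in the multiplicativity splits off the
last argument: `Φ⁽ᵏ⁺¹⁾(g)(x₀, …, xₖ) = Φ⁽ᵏ⁾(g)(x₀, …, xₖ₋₁) ∘ Φ⁽¹⁾(e)(xₖ)`, since `Ad e = id`.
Iterating, `Φ⁽ᵏ⁾(g)(x₁, …, xₖ) = Φ⁽⁰⁾(g) ∘ Φ⁽¹⁾(e)(x₁) ∘ ⋯ ∘ Φ⁽¹⁾(e)(xₖ)`, so `Φ` is determined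
by `Φ⁽⁰⁾` and `Φ⁽¹⁾`. -/

namespace Stmt15

variable {𝔤 : Type*} [LieRing 𝔤] [LieAlgebra ℝ 𝔤]

def removeOne {α : Type*} {n : ℕ} (x : Fin (n + 1) → α) (p : Fin (n + 1)) : Fin n → α :=
  fun m => x ⟨if m.val < p.val then m.val else m.val + 1, by have := m.isLt; split_ifs <;> omega⟩

/-- `(⁅x p, x q⁆, x₀, …, x̂_p, …, x̂_q, …, x_n)` for `p < q`. -/
def bracketTuple {n : ℕ} (x : Fin (n + 1) → 𝔤) (p q : Fin (n + 1)) : Fin n → 𝔤 :=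
  fun l =>
    if l.val = 0 then ⁅x p, x q⁆
    else
      x ⟨if l.val - 1 < p.val then l.val - 1 else if l.val < q.val then l.val else l.val + 1,
        by have := l.isLt; split_ifs <;> omega⟩

variable {G : Type*} [Group G] {V : Type*} [NormedAddCommGroup V] [NormedSpace ℝ V]

/-- The de Rham differential in the left trivialization. -/
noncomputable def dForm (exp : 𝔤 → G)
    (Φ : ∀ k : ℕ, G → (Fin k → 𝔤) → (V →L[ℝ] V))
    (k : ℕ) (g : G) (x : Fin (k + 1) → 𝔤) : V →L[ℝ] V :=
  (∑ p : Fin (k + 1), ((-1 : ℝ) ^ p.val) •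
      deriv (fun t : ℝ => Φ k (g * exp (t • x p)) (removeOne x p)) 0)
    + ∑ p : Fin (k + 1), ∑ q : Fin (k + 1),
        if p.val < q.val then
          ((-1 : ℝ) ^ (p.val + q.val)) • Φ k g (bracketTuple x p q)
        else 0

/-- A `k`-form is a function of `g : G` and `k` vectors of `𝔤` (left trivialization of `TG`);
multiplicativity `μ*Φ = π₁*Φ ∧ π₂*Φ` is recorded on split tangent vectors, those at the first
factor being transported by `Ad`. -/
def IsRepresentationForm (exp : 𝔤 → G) (Ad : G →* (Module.End ℝ 𝔤)ˣ) (δ : V →L[ℝ] V)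
    (Φ : ∀ k : ℕ, G → (Fin k → 𝔤) → (V →L[ℝ] V)) : Prop :=
  Φ 0 1 (fun i => i.elim0) = 1
  ∧ (∀ (k : ℕ) (g : G) (x : Fin (k + 1) → 𝔤),
      dForm exp Φ k g x
        = ((-1 : ℝ) ^ k) • (δ * Φ (k + 1) g x + ((-1 : ℝ) ^ k) • (Φ (k + 1) g x * δ)))
  ∧ (∀ (a b : ℕ) (g h : G) (y : Fin a → 𝔤) (z : Fin b → 𝔤),
      Φ (a + b) (g * h) (Fin.append (fun l => (Ad h⁻¹ : Module.End ℝ 𝔤) (y l)) z)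
        = Φ a g y * Φ b h z)

namespace IsRepresentationForm

variable {exp : 𝔤 → G} {Ad : G →* (Module.End ℝ 𝔤)ˣ} {δ : V →L[ℝ] V}
  {Φ : ∀ k : ℕ, G → (Fin k → 𝔤) → (V →L[ℝ] V)}

theorem apply_snoc (hΦ : IsRepresentationForm exp Ad δ Φ) {n : ℕ} (g : G) (y : Fin n → 𝔤)
    (v : 𝔤) : Φ (n + 1) g (Fin.snoc y v) = Φ n g y * Φ 1 1 (fun _ => v) := by
  simpa [Fin.append_right_eq_snoc] using hΦ.2.2 n 1 g 1 y (fun _ => v)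

theorem apply_eq_mul_prod (hΦ : IsRepresentationForm exp Ad δ Φ) (k : ℕ) (g : G)
    (x : Fin k → 𝔤) :
    Φ k g x = Φ 0 g Fin.elim0 * (List.ofFn fun i => Φ 1 1 (fun _ => x i)).prod := by
  induction k with
  | zero => rw [List.ofFn_zero, List.prod_nil, mul_one, Subsingleton.elim x Fin.elim0]
  | succ n ih =>
    conv_lhs => rw [← Fin.snoc_init_self x]
    rw [hΦ.apply_snoc, ih, List.ofFn_succ', List.prod_concat, mul_assoc]
    rfl

end IsRepresentationForm

/-- A representation form is determined by its components of degrees 0 and 1. -/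
theorem representation_form_unique (exp : 𝔤 → G) (Ad : G →* (Module.End ℝ 𝔤)ˣ)
    (δ : V →L[ℝ] V)
    (Φ Ψ : ∀ k : ℕ, G → (Fin k → 𝔤) → (V →L[ℝ] V))
    (hΦ : IsRepresentationForm exp Ad δ Φ)
    (hΨ : IsRepresentationForm exp Ad δ Ψ)
    (h0 : Φ 0 = Ψ 0) (h1 : Φ 1 = Ψ 1) :
    Φ = Ψ := by
  funext k g x
  rw [hΦ.apply_eq_mul_prod, hΨ.apply_eq_mul_prod, h0, h1]

end Stmt15
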